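/- arXiv:0806.3771 — 2 statements merged into one kernel-verified Lean document; each statement's English description precedes it below -/
import Mathlib

section
/- A group homomorphism φ : G₁ → G₂ between finitely generated groups (each equipped with a word metric from a finite generating set) is a quasiisometry if and only if its kernel is finite and its image has finite index in G₂. -/
/-- The word length of `g` with respect to a generating set `S`. -/
noncomputable def wordLength {G : Type*} [Group G] (S : Set G) (g : G) : ℕ :=
  sInf {n : ℕ | ∃ w : List G, w.length = n ∧ (∀ x ∈ w, x ∈ S ∨ x⁻¹ ∈ S) ∧ w.prod = g}

/-- The word metric on `G` associated to a generating set `S`. -/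
noncomputable def wordDist {G : Type*} [Group G] (S : Set G) (g h : G) : ℝ :=
  (wordLength S (g⁻¹ * h) : ℝ)

/-- A quasiisometry with respect to given distance functions. -/
def IsQIWith {X Y : Type*} (d₁ : X → X → ℝ) (d₂ : Y → Y → ℝ) (f : X → Y) : Prop :=
  ∃ lam C : ℝ, 0 < lam ∧ 0 < C ∧
    (∀ x y : X, lam⁻¹ * d₁ x y - C ≤ d₂ (f x) (f y) ∧ d₂ (f x) (f y) ≤ lam * d₁ x y + C) ∧
    ∀ y : Y, ∃ x : X, d₂ (f x) y < C

/-!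
A homomorphism is Lipschitz for word metrics: it suffices to bound the lengths of the images of
the finitely many generators. If the image has finite index, every `y` is `φ (ψ y) * ρ` with `ρ`
in a finite set `F`. Then `(ψ y)⁻¹ * ψ (y * s)` is sent by `φ` into the finite set
`F * (S₂ ∪ S₂⁻¹) * F⁻¹`, whose preimage is finite when the kernel is, so `ψ` is Lipschitz as
well, and it is a coarse inverse of `φ`. Conversely, the lower quasiisometry bound confines the
kernel to a ball, and coarse surjectivity puts a representative of every coset of the image in a
ball; balls are finite.
-/

open Pointwise

section WordLength

variable {G : Type*} [Group G] {S : Set G}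

lemma wordLength_le_length {w : List G} (hw : ∀ x ∈ w, x ∈ S ∨ x⁻¹ ∈ S) :
    wordLength S w.prod ≤ w.length :=
  Nat.sInf_le ⟨w, rfl, hw, rfl⟩

lemma exists_word_length_eq_wordLength (hS : Subgroup.closure S = ⊤) (g : G) :
    ∃ w : List G, w.length = wordLength S g ∧ (∀ x ∈ w, x ∈ S ∨ x⁻¹ ∈ S) ∧ w.prod = g := by
  refine Nat.sInf_mem (s := {n | ∃ w : List G, w.length = n ∧ _ ∧ w.prod = g}) ?_
  have hg : g ∈ Submonoid.closure (S ∪ S⁻¹) := by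
    rw [← Subgroup.closure_toSubmonoid, hS]; trivial
  obtain ⟨w, hw, rfl⟩ := Submonoid.exists_list_of_mem_closure hg
  exact ⟨w.length, w, rfl, hw, rfl⟩

@[simp]
lemma wordLength_one : wordLength S (1 : G) = 0 :=
  Nat.le_zero.mp (wordLength_le_length (w := []) (by simp))

lemma wordLength_mul_le (hS : Subgroup.closure S = ⊤) (a b : G) :
    wordLength S (a * b) ≤ wordLength S a + wordLength S b := by
  obtain ⟨u, hu, hSu, rfl⟩ := exists_word_length_eq_wordLength hS a
  obtain ⟨v, hv, hSv, rfl⟩ := exists_word_length_eq_wordLength hS b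
  rw [← List.prod_append, ← hu, ← hv, ← List.length_append]
  exact wordLength_le_length fun x hx => (List.mem_append.mp hx).elim (hSu x) (hSv x)

lemma wordLength_inv_le (hS : Subgroup.closure S = ⊤) (a : G) :
    wordLength S a⁻¹ ≤ wordLength S a := by
  obtain ⟨w, hw, hSw, rfl⟩ := exists_word_length_eq_wordLength hS a
  rw [← hw, List.prod_inv_reverse, ← List.length_map (·⁻¹), ← List.length_reverse]
  refine wordLength_le_length fun x hx => ?_
  obtain ⟨y, hy, rfl⟩ := List.mem_map.mp (List.mem_reverse.mp hx)
  simpa [or_comm] using hSw y hy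

lemma wordLength_inv (hS : Subgroup.closure S = ⊤) (a : G) :
    wordLength S a⁻¹ = wordLength S a :=
  (wordLength_inv_le hS a).antisymm (by simpa using wordLength_inv_le hS a⁻¹)

lemma finite_setOf_wordLength_le (hfin : S.Finite) (hS : Subgroup.closure S = ⊤) (n : ℕ) :
    {g : G | wordLength S g ≤ n}.Finite := by
  have : Finite ↥(S ∪ S⁻¹) := (hfin.union hfin.inv).to_subtype
  refine ((List.finite_length_le _ n).image fun l : List ↥(S ∪ S⁻¹) => (l.map (↑)).prod).subset ?_
  intro g hg
  obtain ⟨w, hw, hSw, rfl⟩ := exists_word_length_eq_wordLength hS g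
  lift w to List ↥(S ∪ S⁻¹) using hSw
  exact ⟨w, by simpa using hw.trans_le hg, rfl⟩

lemma wordDist_comm (hS : Subgroup.closure S = ⊤) (x y : G) : wordDist S x y = wordDist S y x := by
  rw [wordDist, wordDist, ← wordLength_inv hS, mul_inv_rev, inv_inv]

lemma wordDist_triangle (hS : Subgroup.closure S = ⊤) (x y z : G) :
    wordDist S x z ≤ wordDist S x y + wordDist S y z := by
  have := wordLength_mul_le hS (x⁻¹ * y) (y⁻¹ * z)
  rw [show x⁻¹ * y * (y⁻¹ * z) = x⁻¹ * z by group] at this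
  unfold wordDist
  exact_mod_cast this

end WordLength

section Lipschitz

variable {G H : Type*} [Group G] [Group H] {S : Set G} {T : Set H}

lemma wordDist_le_mul_wordDist_of_generator_step (hS : Subgroup.closure S = ⊤)
    (hT : Subgroup.closure T = ⊤) (f : G → H) {K : ℝ}
    (hf : ∀ x s, s ∈ S ∪ S⁻¹ → wordDist T (f x) (f (x * s)) ≤ K) (x y : G) :
    wordDist T (f x) (f y) ≤ K * wordDist S x y := by
  have along_word : ∀ (w : List G) (x : G), (∀ s ∈ w, s ∈ S ∪ S⁻¹) →
      wordDist T (f x) (f (x * w.prod)) ≤ K * w.length := by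
    intro w
    induction w with
    | nil => simp [wordDist]
    | cons s w ih =>
      intro x hw
      have hstep := hf x s (hw s List.mem_cons_self)
      have hrest := ih (x * s) fun t ht => hw t (List.mem_cons_of_mem s ht)
      calc wordDist T (f x) (f (x * (s :: w).prod))
          ≤ wordDist T (f x) (f (x * s)) + wordDist T (f (x * s)) (f (x * s * w.prod)) := by
            rw [List.prod_cons, ← mul_assoc]; exact wordDist_triangle hT _ _ _
        _ ≤ K * (s :: w).length := by push_cast [List.length_cons]; linarith
  obtain ⟨w, hw, hSw, hprod⟩ := exists_word_length_eq_wordLength hS (x⁻¹ * y)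
  simpa [wordDist, hprod, hw] using along_word w x hSw

end Lipschitz

lemma Subgroup.finiteIndex_iff_exists_finite_inv_mul_mem {G : Type*} [Group G] (H : Subgroup G) :
    H.FiniteIndex ↔ ∃ F : Set G, F.Finite ∧ ∀ y, ∃ h ∈ H, h⁻¹ * y ∈ F := by
  constructor
  · intro hH
    refine ⟨Set.range fun q : G ⧸ H => q.out⁻¹, Set.finite_range _, fun y => ?_⟩
    have hmem : (QuotientGroup.mk y⁻¹ : G ⧸ H).out⁻¹ * y⁻¹ ∈ H :=
      QuotientGroup.eq.mp (QuotientGroup.out_eq' _)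
    refine ⟨y * (QuotientGroup.mk y⁻¹ : G ⧸ H).out, ?_, ⟨QuotientGroup.mk y⁻¹, by group⟩⟩
    simpa using H.inv_mem hmem
  · rintro ⟨F, hF, hcover⟩
    suffices Finite (G ⧸ H) from H.finiteIndex_of_finite_quotient
    refine Set.finite_univ_iff.mp ((hF.image fun ρ => (QuotientGroup.mk ρ⁻¹ : G ⧸ H)).subset ?_)
    rintro q -
    obtain ⟨y, rfl⟩ := QuotientGroup.mk_surjective q
    obtain ⟨h, hh, hF⟩ := hcover y⁻¹
    exact ⟨_, hF, QuotientGroup.eq.mpr (by simpa using hh)⟩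

lemma MonoidHom.finite_preimage {G H : Type*} [Group G] [Group H] (φ : G →* H)
    (hker : (φ.ker : Set G).Finite) {E : Set H} (hE : E.Finite) : (φ ⁻¹' E).Finite := by
  refine hE.preimage' fun e _ => ?_
  rcases Set.eq_empty_or_nonempty (φ ⁻¹' {e}) with h | ⟨x, hx⟩
  · simp [h]
  refine (hker.image (x * ·)).subset fun y hy => ⟨x⁻¹ * y, ?_, by simp⟩
  simp_all [MonoidHom.mem_ker]

lemma isQIWith_of_bounds {X Y : Type*} {d₁ : X → X → ℝ} {d₂ : Y → Y → ℝ} {f : X → Y} {a b : ℝ}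
    (ha : 0 ≤ a) (hb : 0 ≤ b)
    (hd₁ : ∀ x x', 0 ≤ d₁ x x') (hd₂ : ∀ y y', 0 ≤ d₂ y y')
    (hupper : ∀ x x', d₂ (f x) (f x') ≤ a * d₁ x x' + b)
    (hlower : ∀ x x', d₁ x x' ≤ a * d₂ (f x) (f x') + b)
    (hdense : ∀ y, ∃ x, d₂ (f x) y ≤ b) : IsQIWith d₁ d₂ f := by
  refine ⟨a + 1, b + 1, by positivity, by positivity, fun x x' => ⟨?_, ?_⟩, fun y => ?_⟩
  · have h := hlower x x'
    have hd := hd₂ (f x) (f x')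
    rw [sub_le_iff_le_add, inv_mul_le_iff₀ (by positivity)]
    nlinarith
  · nlinarith [hupper x x', hd₁ x x']
  · obtain ⟨x, hx⟩ := hdense y
    exact ⟨x, by linarith⟩

namespace MonoidHom

variable {G₁ G₂ : Type*} [Group G₁] [Group G₂] {S₁ : Set G₁} {S₂ : Set G₂} (φ : G₁ →* G₂)

lemma finite_ker_of_isQIWith (h₁fin : S₁.Finite) (h₁gen : Subgroup.closure S₁ = ⊤)
    (hqi : IsQIWith (wordDist S₁) (wordDist S₂) φ) : (φ.ker : Set G₁).Finite := by
  obtain ⟨lam, C, hlam, -, hbd, -⟩ := hqi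
  refine (finite_setOf_wordLength_le h₁fin h₁gen ⌊lam * C⌋₊).subset fun k hk => Nat.le_floor ?_
  have h := (hbd 1 k).1
  simp only [wordDist, map_one, mem_ker.mp hk, inv_one, one_mul, wordLength_one,
    Nat.cast_zero, sub_nonpos] at h
  rwa [inv_mul_le_iff₀ hlam] at h

lemma finiteIndex_range_of_isQIWith (h₂fin : S₂.Finite) (h₂gen : Subgroup.closure S₂ = ⊤)
    (hqi : IsQIWith (wordDist S₁) (wordDist S₂) φ) : φ.range.FiniteIndex := by
  obtain ⟨-, C, -, -, -, hdense⟩ := hqi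
  refine φ.range.finiteIndex_iff_exists_finite_inv_mul_mem.mpr
    ⟨_, finite_setOf_wordLength_le h₂fin h₂gen ⌈C⌉₊, fun y => ?_⟩
  obtain ⟨x, hx⟩ := hdense y
  exact ⟨φ x, ⟨x, rfl⟩, Nat.cast_le.mp (hx.le.trans (Nat.le_ceil C))⟩

lemma exists_wordDist_map_le (h₁fin : S₁.Finite) (h₁gen : Subgroup.closure S₁ = ⊤)
    (h₂gen : Subgroup.closure S₂ = ⊤) :
    ∃ M : ℝ, 0 ≤ M ∧ ∀ x y, wordDist S₂ (φ x) (φ y) ≤ M * wordDist S₁ x y := by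
  obtain ⟨M, hM⟩ := ((h₁fin.union h₁fin.inv).image fun s => wordLength S₂ (φ s)).bddAbove
  refine ⟨M, M.cast_nonneg, wordDist_le_mul_wordDist_of_generator_step h₁gen h₂gen φ
    fun x s hs => ?_⟩
  simpa [wordDist] using hM ⟨s, hs, rfl⟩

lemma exists_wordDist_le_wordDist_map (h₂fin : S₂.Finite) (h₁gen : Subgroup.closure S₁ = ⊤)
    (h₂gen : Subgroup.closure S₂ = ⊤) (hker : (φ.ker : Set G₁).Finite) {F : Set G₂}
    (hF : F.Finite) (hcover : ∀ y, ∃ x, (φ x)⁻¹ * y ∈ F) :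
    ∃ K B : ℝ, 0 ≤ K ∧ 0 ≤ B ∧ ∀ x x', wordDist S₁ x x' ≤ K * wordDist S₂ (φ x) (φ x') + B := by
  choose ψ hψ using hcover
  obtain ⟨K, hK⟩ := ((φ.finite_preimage hker
    ((hF.mul (h₂fin.union h₂fin.inv)).mul hF.inv)).image (wordLength S₁)).bddAbove
  obtain ⟨B, hB⟩ := ((φ.finite_preimage hker hF).image (wordLength S₁)).bddAbove
  have hψ_lipschitz : ∀ y y', wordDist S₁ (ψ y) (ψ y') ≤ K * wordDist S₂ y y' := by
    refine wordDist_le_mul_wordDist_of_generator_step h₂gen h₁gen ψ fun y s hs => ?_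
    have hstep : (φ (ψ y))⁻¹ * φ (ψ (y * s)) =
        (φ (ψ y))⁻¹ * y * s * ((φ (ψ (y * s)))⁻¹ * (y * s))⁻¹ := by group
    have hmem : φ ((ψ y)⁻¹ * ψ (y * s)) ∈ F * (S₂ ∪ S₂⁻¹) * F⁻¹ := by
      rw [map_mul, map_inv, hstep]
      exact Set.mul_mem_mul (Set.mul_mem_mul (hψ y) hs) (Set.inv_mem_inv.mpr (hψ (y * s)))
    exact Nat.cast_le.mpr (hK ⟨_, hmem, rfl⟩)
  have hψ_near : ∀ x, wordDist S₁ (ψ (φ x)) x ≤ B := by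
    intro x
    have hmem : φ ((ψ (φ x))⁻¹ * x) ∈ F := by simpa using hψ (φ x)
    exact Nat.cast_le.mpr (hB ⟨_, hmem, rfl⟩)
  refine ⟨K, 2 * B, K.cast_nonneg, by positivity, fun x x' => ?_⟩
  calc wordDist S₁ x x'
      ≤ wordDist S₁ x (ψ (φ x)) + wordDist S₁ (ψ (φ x)) (ψ (φ x')) + wordDist S₁ (ψ (φ x')) x' := by
        linarith [wordDist_triangle h₁gen x (ψ (φ x')) x',
          wordDist_triangle h₁gen x (ψ (φ x)) (ψ (φ x'))]
    _ ≤ B + K * wordDist S₂ (φ x) (φ x') + B := by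
        rw [wordDist_comm h₁gen x]
        gcongr
        exacts [hψ_near x, hψ_lipschitz _ _, hψ_near x']
    _ = K * wordDist S₂ (φ x) (φ x') + 2 * B := by ring

lemma isQIWith_of_finite_ker_of_finiteIndex (h₁fin : S₁.Finite) (h₂fin : S₂.Finite)
    (h₁gen : Subgroup.closure S₁ = ⊤) (h₂gen : Subgroup.closure S₂ = ⊤)
    (hker : (φ.ker : Set G₁).Finite) (hind : φ.range.FiniteIndex) :
    IsQIWith (wordDist S₁) (wordDist S₂) φ := by
  obtain ⟨F, hF, hcover⟩ := φ.range.finiteIndex_iff_exists_finite_inv_mul_mem.mp hind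
  replace hcover : ∀ y, ∃ x, (φ x)⁻¹ * y ∈ F := fun y => by
    obtain ⟨_, ⟨x, rfl⟩, hx⟩ := hcover y
    exact ⟨x, hx⟩
  obtain ⟨M, hM, hupper⟩ := φ.exists_wordDist_map_le h₁fin h₁gen h₂gen
  obtain ⟨K, B, hK, hB, hlower⟩ := φ.exists_wordDist_le_wordDist_map h₂fin h₁gen h₂gen hker hF hcover
  obtain ⟨N, hN⟩ := (hF.image (wordLength S₂)).bddAbove
  refine isQIWith_of_bounds (a := max M K) (b := B + N) (le_max_of_le_left hM) (by positivity)
    (fun _ _ => Nat.cast_nonneg _) (fun _ _ => Nat.cast_nonneg _) (fun x x' => ?_)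
    (fun x x' => ?_) (fun y => ?_)
  · have := hupper x x'
    have : 0 ≤ wordDist S₁ x x' := Nat.cast_nonneg _
    nlinarith [le_max_left M K]
  · have := hlower x x'
    have : 0 ≤ wordDist S₂ (φ x) (φ x') := Nat.cast_nonneg _
    nlinarith [le_max_right M K]
  · obtain ⟨x, hx⟩ := hcover y
    refine ⟨x, ?_⟩
    have : (wordLength S₂ ((φ x)⁻¹ * y) : ℝ) ≤ N := by exact_mod_cast hN ⟨_, hx, rfl⟩
    simp only [wordDist]
    linarith

end MonoidHom

/-- A homomorphism of finitely generated groups (with word metrics) is a quasiisometry if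
and only if its kernel is finite and its image has finite index. -/
theorem hom_quasiIsometry_iff (G₁ G₂ : Type) [Group G₁] [Group G₂]
    (S₁ : Set G₁) (S₂ : Set G₂) (h₁fin : S₁.Finite) (h₂fin : S₂.Finite)
    (h₁gen : Subgroup.closure S₁ = ⊤) (h₂gen : Subgroup.closure S₂ = ⊤)
    (φ : G₁ →* G₂) :
    IsQIWith (wordDist S₁) (wordDist S₂) φ ↔
      (φ.ker : Set G₁).Finite ∧ φ.range.FiniteIndex :=
  ⟨fun hqi => ⟨φ.finite_ker_of_isQIWith h₁fin h₁gen hqi,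
      φ.finiteIndex_range_of_isQIWith h₂fin h₂gen hqi⟩,
    fun ⟨hker, hind⟩ => φ.isQIWith_of_finite_ker_of_finiteIndex h₁fin h₂fin h₁gen h₂gen hker hind⟩
end

section
/- If X is a geodesic space that is δ-hyperbolic and f : X → Y is a quasiisometry onto a geodesic space Y, then Y is δ'-hyperbolic for some δ' ≥ 0; that is, hyperbolicity is a quasiisometry invariant among geodesic spaces. -/
/-- A geodesic segment from `x` to `y`: the image of an isometric parametrization of
`[0, dist x y]`. -/
def IsGeodesicSegment {X : Type*} [MetricSpace X] (s : Set X) (x y : X) : Prop :=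
  ∃ γ : ℝ → X, γ 0 = x ∧ γ (dist x y) = y ∧
    (∀ u ∈ Set.Icc (0 : ℝ) (dist x y), ∀ v ∈ Set.Icc (0 : ℝ) (dist x y),
      dist (γ u) (γ v) = |u - v|) ∧
    s = γ '' Set.Icc 0 (dist x y)

/-- A geodesic metric space: any two points are joined by a geodesic segment. -/
def IsGeodesicSpace (X : Type*) [MetricSpace X] : Prop :=
  ∀ x y : X, ∃ s : Set X, IsGeodesicSegment s x y

/-- `X` is `δ`-hyperbolic: every geodesic triangle is `δ`-thin, i.e. each side is
contained in the closed `δ`-neighborhood of the union of the other two sides. -/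
def DeltaHyperbolic (X : Type*) [MetricSpace X] (δ : ℝ) : Prop :=
  ∀ x y z : X, ∀ s₁ s₂ s₃ : Set X,
    IsGeodesicSegment s₁ y z → IsGeodesicSegment s₂ x z → IsGeodesicSegment s₃ x y →
    (∀ p ∈ s₁, ∃ q ∈ s₂ ∪ s₃, dist p q ≤ δ) ∧
    (∀ p ∈ s₂, ∃ q ∈ s₁ ∪ s₃, dist p q ≤ δ) ∧
    (∀ p ∈ s₃, ∃ q ∈ s₁ ∪ s₂, dist p q ≤ δ)

/-- A quasiisometry between metric spaces. -/
def IsQuasiIsometry {X Y : Type*} [MetricSpace X] [MetricSpace Y] (f : X → Y) : Prop :=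
  ∃ lam C : ℝ, 0 < lam ∧ 0 < C ∧
    (∀ x y : X, lam⁻¹ * dist x y - C ≤ dist (f x) (f y) ∧
      dist (f x) (f y) ≤ lam * dist x y + C) ∧
    ∀ y : Y, ∃ x : X, dist (f x) y < C

lemma two_mul_add_one_le (k : ℕ) : 2 * k + 1 ≤ 2 * 2 ^ k := by
  induction k with
  | zero => simp
  | succ k ih =>
    have h1 : 1 ≤ 2 ^ k := Nat.one_le_two_pow
    have : 2 ^ (k+1) = 2 * 2 ^ k := by ring
    omega

lemma sq_le_two_pow (k : ℕ) : k ^ 2 ≤ 2 * 2 ^ k := by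
  induction k with
  | zero => simp
  | succ k ih =>
    have h1 := two_mul_add_one_le k
    have h2 : 2 ^ (k+1) = 2 * 2 ^ k := by ring
    have h3 : (k+1)^2 = k^2 + (2*k+1) := by ring
    omega

lemma sq_le_two_pow_real (k : ℕ) : ((k : ℝ)) ^ 2 ≤ 2 * 2 ^ k := by
  have := sq_le_two_pow k
  calc ((k:ℝ))^2 = ((k^2 : ℕ) : ℝ) := by push_cast; ring
    _ ≤ ((2 * 2^k : ℕ) : ℝ) := by exact_mod_cast Nat.cast_le.mpr this
    _ = 2 * 2 ^ k := by push_cast; ring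

lemma geodesic_symm {X : Type*} [MetricSpace X] {s : Set X} {x y : X}
    (h : IsGeodesicSegment s x y) : IsGeodesicSegment s y x := by
  obtain ⟨γ, h0, hd, hiso, him⟩ := h
  have hdc : dist y x = dist x y := dist_comm y x
  refine ⟨fun t => γ (dist x y - t), ?_, ?_, ?_, ?_⟩
  · simpa [hdc] using hd
  · simpa [hdc] using h0
  · intro u hu v hv
    rw [hdc] at hu hv
    have hu' : dist x y - u ∈ Set.Icc (0:ℝ) (dist x y) := ⟨by linarith [hu.2], by linarith [hu.1]⟩
    have hv' : dist x y - v ∈ Set.Icc (0:ℝ) (dist x y) := ⟨by linarith [hv.2], by linarith [hv.1]⟩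
    rw [hiso _ hu' _ hv']
    rw [show dist x y - u - (dist x y - v) = v - u by ring, abs_sub_comm]
  · rw [him, hdc]
    ext p
    constructor
    · rintro ⟨t, ht, rfl⟩
      exact ⟨dist x y - t, ⟨by linarith [ht.2], by linarith [ht.1]⟩, by ring_nf⟩
    · rintro ⟨t, ht, rfl⟩
      exact ⟨dist x y - t, ⟨by linarith [ht.2], by linarith [ht.1]⟩, by ring_nf⟩

lemma subgeodesic {X : Type*} [MetricSpace X] {γ : ℝ → X} {d : ℝ}
    (hiso : ∀ u ∈ Set.Icc (0 : ℝ) d, ∀ v ∈ Set.Icc (0 : ℝ) d, dist (γ u) (γ v) = |u - v|)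
    {u v : ℝ} (hu : u ∈ Set.Icc (0:ℝ) d) (hv : v ∈ Set.Icc (0:ℝ) d) (huv : u ≤ v) :
    IsGeodesicSegment (γ '' Set.Icc u v) (γ u) (γ v) := by
  have hduv : dist (γ u) (γ v) = v - u := by
    rw [hiso _ hu _ hv, abs_of_nonpos (by linarith), neg_sub]
  refine ⟨fun t => γ (u + t), by simp, ?_, ?_, ?_⟩
  · rw [hduv]; ring_nf
  · intro a ha b hb
    rw [hduv] at ha hb
    have ha' : u + a ∈ Set.Icc (0:ℝ) d := ⟨by linarith [ha.1, hu.1], by linarith [ha.2, hv.2]⟩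
    have hb' : u + b ∈ Set.Icc (0:ℝ) d := ⟨by linarith [hb.1, hu.1], by linarith [hb.2, hv.2]⟩
    rw [hiso _ ha' _ hb']
    congr 1; ring
  · rw [hduv]
    ext p
    constructor
    · rintro ⟨t, ht, rfl⟩
      exact ⟨t - u, ⟨by linarith [ht.1], by linarith [ht.2]⟩, by ring_nf⟩
    · rintro ⟨t, ht, rfl⟩
      exact ⟨u + t, ⟨by linarith [ht.1], by linarith [ht.2]⟩, rfl⟩


/-- Subdivide a geodesic segment into a chain with steps ≤ K, staying on the segment. -/
lemma subdivide {X : Type*} [MetricSpace X] {s : Set X} {x y : X} {K : ℝ}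
    (hs : IsGeodesicSegment s x y) (hK : 1 ≤ K) :
    ∃ n : ℕ, ∃ c : ℕ → X, c 0 = x ∧ c n = y ∧ (∀ i, dist (c i) (c (i+1)) ≤ K) ∧
      (∀ i, dist x (c i) ≤ dist x y) ∧ (n : ℝ) ≤ dist x y + 1 := by
  obtain ⟨γ, h0, hd, hiso, -⟩ := hs
  set d := dist x y with hdd
  have hd0 : 0 ≤ d := dist_nonneg
  have hK0 : 0 < K := lt_of_lt_of_le one_pos hK
  have hm : ∀ i : ℕ, min ((i:ℝ) * K) d ∈ Set.Icc (0:ℝ) d :=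
    fun i => ⟨le_min (by positivity) hd0, min_le_right _ _⟩
  refine ⟨⌈d / K⌉₊, fun i => γ (min (i * K) d), ?_, ?_, ?_, ?_, ?_⟩
  · show γ (min ((0:ℕ) * K : ℝ) d) = x
    have : min ((0:ℕ) * K : ℝ) d = 0 := by simp [hd0]
    rw [this, h0]
  · have h1 : d ≤ (⌈d / K⌉₊ : ℝ) * K := by
      have := Nat.le_ceil (d / K)
      calc d = d / K * K := by field_simp
        _ ≤ (⌈d / K⌉₊ : ℝ) * K := by nlinarith
    show γ (min ((⌈d / K⌉₊ : ℝ) * K) d) = y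
    rw [min_eq_right h1]; exact hd
  · intro i
    show dist (γ (min ((i:ℝ) * K) d)) (γ (min (((i+1:ℕ):ℝ) * K) d)) ≤ K
    rw [hiso _ (hm i) _ (hm (i+1))]
    rw [abs_le]
    have h1 : min ((i:ℝ) * K) d ≤ min (((i+1:ℕ):ℝ) * K) d := by
      apply min_le_min _ le_rfl; push_cast; nlinarith
    have h2 : min (((i+1:ℕ):ℝ) * K) d ≤ min ((i:ℝ) * K) d + K := by
      rcases le_total d ((i:ℝ) * K) with h | h
      · rw [min_eq_right h]
        have : min (((i+1:ℕ):ℝ) * K) d ≤ d := min_le_right _ _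
        linarith
      · rw [min_eq_left h]
        have : min (((i+1:ℕ):ℝ) * K) d ≤ ((i+1:ℕ):ℝ) * K := min_le_left _ _
        push_cast at this ⊢; linarith
    constructor <;> linarith
  · intro i
    show dist x (γ (min ((i:ℝ) * K) d)) ≤ d
    rw [← h0, hiso _ (by exact ⟨le_rfl, hd0⟩) _ (hm i)]
    rw [abs_of_nonpos (by linarith [(hm i).1]), neg_sub, sub_zero]
    exact (hm i).2
  · calc (⌈d / K⌉₊ : ℝ) ≤ d / K + 1 := le_of_lt (Nat.ceil_lt_add_one (by positivity))
      _ ≤ d + 1 := by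
        have : d / K ≤ d := by
          rw [div_le_iff₀ hK0]; nlinarith
        linarith

lemma chain_dist {X : Type*} [MetricSpace X] {K : ℝ} (hK : 0 ≤ K) (c : ℕ → X) (n : ℕ)
    (hsteps : ∀ i < n, dist (c i) (c (i+1)) ≤ K) :
    ∀ i j, i ≤ j → j ≤ n → dist (c i) (c j) ≤ K * ((j : ℝ) - i) := by
  intro i j hij hjn
  induction j with
  | zero => simp_all
  | succ j ih =>
    rcases Nat.lt_or_ge i (j+1) with h | h
    · have hij' : i ≤ j := by omega
      have := ih hij' (by omega)
      calc dist (c i) (c (j+1)) ≤ dist (c i) (c j) + dist (c j) (c (j+1)) := dist_triangle _ _ _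
        _ ≤ K * ((j:ℝ) - i) + K := by
            have := hsteps j (by omega)
            linarith
        _ = K * (((j+1:ℕ):ℝ) - i) := by push_cast; ring
    · have : i = j + 1 := by omega
      subst this; simp [hK]

lemma chain_append {X : Type*} [MetricSpace X] {K : ℝ} (c₁ c₂ : ℕ → X) (n₁ n₂ : ℕ)
    (h1 : ∀ i < n₁, dist (c₁ i) (c₁ (i+1)) ≤ K)
    (h2 : ∀ i < n₂, dist (c₂ i) (c₂ (i+1)) ≤ K)
    (hj : c₁ n₁ = c₂ 0) :
    ∃ c : ℕ → X, c 0 = c₁ 0 ∧ c (n₁ + n₂) = c₂ n₂ ∧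
      (∀ i < n₁ + n₂, dist (c i) (c (i+1)) ≤ K) ∧
      (∀ i ≤ n₁ + n₂, (∃ j ≤ n₁, c i = c₁ j) ∨ (∃ j ≤ n₂, c i = c₂ j)) := by
  refine ⟨fun i => if i < n₁ then c₁ i else c₂ (i - n₁), ?_, ?_, ?_, ?_⟩
  · by_cases h : 0 < n₁
    · simp [h]
    · have h0 : n₁ = 0 := by omega
      subst h0
      simp [← hj]
  · have : ¬ (n₁ + n₂ < n₁) := by omega
    simp [this]
  · intro i hi
    by_cases ha : i + 1 < n₁
    · have hb : i < n₁ := by omega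
      simp only [if_pos ha, if_pos hb]
      exact h1 i hb
    · by_cases hb : i < n₁
      · have he : i + 1 = n₁ := by omega
        simp only [if_pos hb, if_neg ha]
        have : i + 1 - n₁ = 0 := by omega
        rw [this, ← hj, ← he]
        exact h1 i hb
      · simp only [if_neg ha, if_neg hb]
        have he : i + 1 - n₁ = (i - n₁) + 1 := by omega
        rw [he]
        exact h2 (i - n₁) (by omega)
  · intro i hi
    by_cases hb : i < n₁
    · left; exact ⟨i, by omega, by simp [hb]⟩
    · right; exact ⟨i - n₁, by omega, by simp [hb]⟩

lemma chain_seg {X : Type*} [MetricSpace X] {K : ℝ} (c : ℕ → X) (n : ℕ)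
    (hsteps : ∀ i < n, dist (c i) (c (i+1)) ≤ K) (i j : ℕ) (hi : i ≤ n) (hj : j ≤ n) :
    ∃ m : ℕ, ∃ c' : ℕ → X, c' 0 = c i ∧ c' m = c j ∧
      (∀ l < m, dist (c' l) (c' (l+1)) ≤ K) ∧
      (∀ l ≤ m, ∃ r ≤ n, c' l = c r) ∧ (m : ℝ) ≤ |(i:ℝ) - j| := by
  rcases le_total i j with h | h
  · refine ⟨j - i, fun l => c (i + min l (j - i)), by simp, ?_, ?_, ?_, ?_⟩
    · show c (i + min (j - i) (j - i)) = c j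
      congr 1; omega
    · intro l hl
      show dist (c (i + min l (j - i))) (c (i + min (l+1) (j - i))) ≤ K
      have e1 : i + min l (j - i) = i + l := by omega
      have e2 : i + min (l+1) (j - i) = i + l + 1 := by omega
      rw [e1, e2]
      exact hsteps (i + l) (by omega)
    · intro l hl
      exact ⟨i + min l (j - i), by omega, rfl⟩
    · have e : ((j - i : ℕ) : ℝ) = (j:ℝ) - i := by
        push_cast [h]; ring
      rw [e, abs_sub_comm, abs_of_nonneg (sub_nonneg.mpr (Nat.cast_le.mpr h))]
  · refine ⟨i - j, fun l => c (i - min l (i - j)), by simp, ?_, ?_, ?_, ?_⟩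
    · show c (i - min (i - j) (i - j)) = c j
      congr 1; omega
    · intro l hl
      show dist (c (i - min l (i - j))) (c (i - min (l+1) (i - j))) ≤ K
      have e1 : i - min l (i - j) = (i - (l+1)) + 1 := by omega
      have e2 : i - min (l+1) (i - j) = i - (l+1) := by omega
      rw [e1, e2, dist_comm]
      exact hsteps (i - (l+1)) (by omega)
    · intro l hl
      exact ⟨i - min l (i - j), by omega, rfl⟩
    · have e : ((i - j : ℕ) : ℝ) = (i:ℝ) - j := by
        push_cast [h]; ring
      rw [e, abs_of_nonneg (sub_nonneg.mpr (Nat.cast_le.mpr h))]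
/-- Key divergence lemma: any point on a geodesic joining the endpoints of a chain of
`n ≤ 2^k` steps, each of length at most `K`, lies within `δ*k + K` of the chain. -/
lemma chainA {X : Type*} [MetricSpace X] (hXgeo : IsGeodesicSpace X) {δ : ℝ} (hδ : 0 ≤ δ)
    (hX : DeltaHyperbolic X δ) {K : ℝ} (hK : 0 ≤ K) :
    ∀ (k n : ℕ) (c : ℕ → X), n ≤ 2 ^ k → (∀ i < n, dist (c i) (c (i+1)) ≤ K) →
      ∀ s, IsGeodesicSegment s (c 0) (c n) → ∀ p ∈ s, ∃ i ≤ n, dist p (c i) ≤ δ * k + K := by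
  intro k
  induction k with
  | zero =>
    intro n c hn hsteps s hs p hp
    obtain ⟨γ, h0, hd, hiso, him⟩ := hs
    rw [him] at hp
    obtain ⟨t, ht, rfl⟩ := hp
    refine ⟨0, Nat.zero_le n, ?_⟩
    have hdist : dist (c 0) (c n) ≤ K := by
      interval_cases n
      · simp [hK]
      · exact hsteps 0 (by omega)
    calc dist (γ t) (c 0) = dist (γ t) (γ 0) := by rw [h0]
      _ = |t - 0| := hiso _ ht _ ⟨le_rfl, dist_nonneg⟩
      _ = t := by rw [sub_zero, abs_of_nonneg ht.1]
      _ ≤ dist (c 0) (c n) := ht.2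
      _ ≤ δ * (0:ℕ) + K := by simpa using hdist
  | succ k ih =>
    intro n c hn hsteps s hs p hp
    rcases Nat.lt_or_ge (2^k) n with hbig | hsmall
    swap
    · obtain ⟨i, hi, hdi⟩ := ih n c hsmall hsteps s hs p hp
      refine ⟨i, hi, le_trans hdi ?_⟩
      have : (k:ℝ) ≤ ((k+1:ℕ):ℝ) := by push_cast; linarith
      nlinarith
    · set m := (n + 1) / 2 with hm
      have hmn : m ≤ n := by omega
      have hm2 : m ≤ 2 ^ k := by
        have : 2 ^ (k+1) = 2 * 2 ^ k := by ring
        omega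
      have hnm2 : n - m ≤ 2 ^ k := by
        have : 2 ^ (k+1) = 2 * 2 ^ k := by ring
        omega
      obtain ⟨sa, hsa⟩ := hXgeo (c 0) (c m)
      obtain ⟨sb, hsb⟩ := hXgeo (c m) (c n)
      obtain ⟨-, h2, -⟩ := hX (c 0) (c m) (c n) sb s sa hsb hs hsa
      obtain ⟨q, hq, hpq⟩ := h2 p hp
      rcases hq with hq | hq
      · -- q on geodesic from c m to c n
        obtain ⟨i, hi, hqi⟩ := ih (n - m) (fun i => c (m + i)) hnm2
          (fun i hi => hsteps (m + i) (by omega)) sb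
          (by
            have e : m + (n - m) = n := by omega
            simpa [e] using hsb) q hq
        refine ⟨m + i, by omega, ?_⟩
        calc dist p (c (m + i)) ≤ dist p q + dist q (c (m+i)) := dist_triangle _ _ _
          _ ≤ δ + (δ * k + K) := by exact add_le_add hpq hqi
          _ = δ * ((k+1:ℕ):ℝ) + K := by push_cast; ring
      · -- q on geodesic from c 0 to c m
        obtain ⟨i, hi, hqi⟩ := ih m c hm2 (fun i hi => hsteps i (by omega)) sa hsa q hq
        refine ⟨i, by omega, ?_⟩
        calc dist p (c i) ≤ dist p q + dist q (c i) := dist_triangle _ _ _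
          _ ≤ δ + (δ * k + K) := add_le_add hpq hqi
          _ = δ * ((k+1:ℕ):ℝ) + K := by push_cast; ring
set_option maxHeartbeats 2000000 in
/-- Morse-type stability: a geodesic joining the endpoints of a quasi-geodesic chain
stays within a uniform distance `D` of the chain. -/
lemma chainB {X : Type*} [MetricSpace X] (hXgeo : IsGeodesicSpace X) {δ : ℝ} (hδ : 0 ≤ δ)
    (hX : DeltaHyperbolic X δ) {K a b : ℝ} (hK : 1 ≤ K) (ha : 0 ≤ a) (hb : 0 ≤ b) :
    ∃ D : ℝ, 0 ≤ D ∧ ∀ (n : ℕ) (c : ℕ → X), (∀ i < n, dist (c i) (c (i+1)) ≤ K) →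
      (∀ i ≤ n, ∀ j ≤ n, |(i:ℝ) - (j:ℝ)| ≤ a * dist (c i) (c j) + b) →
      ∀ s, IsGeodesicSegment s (c 0) (c n) → ∀ p ∈ s, ∃ i ≤ n, dist p (c i) ≤ D := by
  have hK0 : (0:ℝ) ≤ K := le_trans zero_le_one hK
  set α : ℝ := 6*a + 2 with hα
  set β : ℝ := b + 2 with hβ
  set B' : ℝ := α * (δ + 1) with hB'
  set A' : ℝ := α * (K + 1) + β with hA'
  set E₀ : ℝ := K + (δ + 1) * (A' + 2*B' + 3) with hE₀
  have hα0 : (0:ℝ) < α := by simp only [hα]; linarith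
  have hβ0 : (0:ℝ) < β := by simp only [hβ]; linarith
  have hB'0 : (0:ℝ) < B' := by rw [hB']; exact mul_pos hα0 (by linarith)
  have hA'0 : (0:ℝ) < A' := by rw [hA']; nlinarith
  have hE₀K : K < E₀ := by
    rw [hE₀]
    nlinarith
  clear_value α β B' A' E₀
  refine ⟨E₀ + 1, by linarith, ?_⟩
  intro n c hsteps hlower s hs p hp
  obtain ⟨γ, h0, hd, hiso, him⟩ := hs
  set d := dist (c 0) (c n) with hdd
  have hd0 : (0:ℝ) ≤ d := dist_nonneg
  have hne : (Finset.range (n+1)).Nonempty := Finset.nonempty_range_add_one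
  set F : ℝ → ℝ := fun t => (Finset.range (n+1)).inf' hne (fun i => dist (γ t) (c i)) with hF
  have hFle : ∀ t : ℝ, ∀ i ≤ n, F t ≤ dist (γ t) (c i) := by
    intro t i hi
    exact Finset.inf'_le _ (Finset.mem_range.mpr (by omega))
  have hFex : ∀ t : ℝ, ∃ i ≤ n, F t = dist (γ t) (c i) := by
    intro t
    obtain ⟨i, hi, hieq⟩ := Finset.exists_mem_eq_inf' hne (fun i => dist (γ t) (c i))
    exact ⟨i, Nat.lt_succ_iff.mp (Finset.mem_range.mp hi), hieq⟩
  have hF0 : ∀ t : ℝ, 0 ≤ F t := by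
    intro t; obtain ⟨i, -, hieq⟩ := hFex t; rw [hieq]; exact dist_nonneg
  clear_value F
  set S : Set ℝ := F '' Set.Icc 0 d with hS
  have hSne : S.Nonempty := ⟨F 0, 0, ⟨le_rfl, hd0⟩, rfl⟩
  have hSbdd : BddAbove S := by
    refine ⟨d, ?_⟩
    rintro r ⟨t, ht, rfl⟩
    calc F t ≤ dist (γ t) (c 0) := hFle t 0 (by omega)
      _ = |t - 0| := by rw [← h0]; exact hiso _ ht _ ⟨le_rfl, hd0⟩
      _ = t := by rw [sub_zero, abs_of_nonneg ht.1]
      _ ≤ d := ht.2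
  -- main claim
  have hDs : sSup S ≤ E₀ + 1 := by
    by_contra hcon
    push_neg at hcon
    obtain ⟨r, hrS, hr⟩ := exists_lt_of_lt_csSup hSne (show sSup S - 1 < sSup S by linarith)
    obtain ⟨t₀, ht₀, hrt⟩ := hrS
    set E : ℝ := F t₀ with hE
    clear_value E
    rw [← hrt] at hr
    have hE0 : 0 ≤ E := by rw [hE]; exact hF0 t₀
    have hEgt : E₀ < E := by linarith
    have hFub : ∀ t ∈ Set.Icc (0:ℝ) d, F t < E + 1 := by
      intro t ht
      have := le_csSup hSbdd (Set.mem_image_of_mem F ht)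
      linarith
    have hdistlow : ∀ i ≤ n, E ≤ dist (γ t₀) (c i) := by
      intro i hi; rw [hE]; exact hFle t₀ i hi
    set u : ℝ := max 0 (t₀ - 2*(E+1)) with hu_def
    set v : ℝ := min d (t₀ + 2*(E+1)) with hv_def
    have hE1 : (0:ℝ) < E + 1 := by linarith
    have hu : u ∈ Set.Icc (0:ℝ) d := ⟨le_max_left _ _, max_le hd0 (by linarith [ht₀.2])⟩
    have hv : v ∈ Set.Icc (0:ℝ) d := ⟨le_min hd0 (by linarith [ht₀.1]), min_le_left _ _⟩
    have hut : u ≤ t₀ := max_le ht₀.1 (by linarith)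
    have htv : t₀ ≤ v := le_min ht₀.2 (by linarith)
    have huv : u ≤ v := hut.trans htv
    have hvu : v - u ≤ 4*(E+1) := by
      have h1 : v ≤ t₀ + 2*(E+1) := min_le_right _ _
      have h2 : t₀ - 2*(E+1) ≤ u := le_max_right _ _
      linarith
    have hguv : dist (γ u) (γ v) = v - u := by
      rw [hiso _ hu _ hv, abs_of_nonpos (by linarith), neg_sub]
    -- A-side chain
    have haside : ∃ (na : ℕ) (cA : ℕ → X) (ia : ℕ), ia ≤ n ∧ cA 0 = γ u ∧ cA na = c ia ∧
        (∀ i < na, dist (cA i) (cA (i+1)) ≤ K) ∧ (∀ i ≤ na, E ≤ dist (γ t₀) (cA i)) ∧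
        ((na : ℝ) ≤ E + 2) ∧ dist (γ u) (c ia) ≤ E + 1 := by
      by_cases hcase : t₀ - 2*(E+1) ≤ 0
      · have hu0 : u = 0 := max_eq_left hcase
        refine ⟨0, fun _ => γ u, 0, by omega, rfl, ?_, by omega, ?_, by norm_num; linarith, ?_⟩
        · rw [hu0, h0]
        · intro i hi
          have : γ u = c 0 := by rw [hu0, h0]
          rw [this]
          exact hdistlow 0 (by omega)
        · have : γ u = c 0 := by rw [hu0, h0]
          rw [this]
          simp; linarith
      · push_neg at hcase
        have hu0 : u = t₀ - 2*(E+1) := max_eq_right (le_of_lt hcase)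
        obtain ⟨ia, hia, hiaeq⟩ := hFex u
        have hiadist : dist (γ u) (c ia) ≤ E + 1 := by
          rw [← hiaeq]; exact le_of_lt (hFub u hu)
        obtain ⟨sA, hsA⟩ := hXgeo (γ u) (c ia)
        obtain ⟨na, cA, hcA0, hcAn, hcAsteps, hcAdist, hcAcount⟩ := subdivide hsA hK
        have htu : dist (γ t₀) (γ u) = 2*(E+1) := by
          rw [hiso _ ht₀ _ hu, hu0]
          rw [show t₀ - (t₀ - 2*(E+1)) = 2*(E+1) by ring, abs_of_nonneg (by linarith)]
        refine ⟨na, cA, ia, hia, hcA0, hcAn, fun i _ => hcAsteps i, ?_, ?_, hiadist⟩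
        · intro i hi
          have h1 : dist (γ u) (cA i) ≤ dist (γ u) (c ia) := hcAdist i
          have h2 : dist (γ t₀) (γ u) ≤ dist (γ t₀) (cA i) + dist (cA i) (γ u) :=
            dist_triangle _ _ _
          rw [dist_comm (cA i) (γ u)] at h2
          linarith
        · calc (na : ℝ) ≤ dist (γ u) (c ia) + 1 := hcAcount
            _ ≤ E + 2 := by linarith
    -- B-side chain
    have hbside : ∃ (nb : ℕ) (cB : ℕ → X) (ib : ℕ), ib ≤ n ∧ cB 0 = c ib ∧ cB nb = γ v ∧
        (∀ i < nb, dist (cB i) (cB (i+1)) ≤ K) ∧ (∀ i ≤ nb, E ≤ dist (γ t₀) (cB i)) ∧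
        ((nb : ℝ) ≤ E + 2) ∧ dist (γ v) (c ib) ≤ E + 1 := by
      by_cases hcase : d ≤ t₀ + 2*(E+1)
      · have hv0 : v = d := min_eq_left hcase
        refine ⟨0, fun _ => γ v, n, le_rfl, ?_, rfl, by omega, ?_, by norm_num; linarith, ?_⟩
        · rw [hv0, hd]
        · intro i hi
          have : γ v = c n := by rw [hv0, hd]
          rw [this]
          exact hdistlow n le_rfl
        · have : γ v = c n := by rw [hv0, hd]
          rw [this]
          simp; linarith
      · push_neg at hcase
        have hv0 : v = t₀ + 2*(E+1) := min_eq_right (le_of_lt hcase)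
        obtain ⟨ib, hib, hibeq⟩ := hFex v
        have hibdist : dist (γ v) (c ib) ≤ E + 1 := by
          rw [← hibeq]; exact le_of_lt (hFub v hv)
        obtain ⟨sB, hsB⟩ := hXgeo (γ v) (c ib)
        obtain ⟨nb, cb, hcb0, hcbn, hcbsteps, hcbdist, hcbcount⟩ := subdivide hsB hK
        have htv' : dist (γ t₀) (γ v) = 2*(E+1) := by
          rw [hiso _ ht₀ _ hv, hv0]
          rw [show t₀ - (t₀ + 2*(E+1)) = -(2*(E+1)) by ring, abs_neg,
            abs_of_nonneg (by linarith)]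
        refine ⟨nb, fun i => cb (nb - i), ib, hib, ?_, ?_, ?_, ?_, ?_, hibdist⟩
        · simp only [Nat.sub_zero]; exact hcbn
        · simp only [Nat.sub_self]; exact hcb0
        · intro i hi
          show dist (cb (nb - i)) (cb (nb - (i+1))) ≤ K
          have e : nb - i = (nb - (i+1)) + 1 := by omega
          rw [e, dist_comm]
          exact hcbsteps (nb - (i+1))
        · intro i hi
          show E ≤ dist (γ t₀) (cb (nb - i))
          have h1 : dist (γ v) (cb (nb - i)) ≤ dist (γ v) (c ib) := hcbdist (nb - i)
          have h2 : dist (γ t₀) (γ v) ≤ dist (γ t₀) (cb (nb - i)) + dist (cb (nb - i)) (γ v) :=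
            dist_triangle _ _ _
          rw [dist_comm (cb (nb - i)) (γ v)] at h2
          linarith
        · calc (nb : ℝ) ≤ dist (γ v) (c ib) + 1 := hcbcount
            _ ≤ E + 2 := by linarith
    obtain ⟨na, cA, ia, hia, hcA0, hcAn, hcAsteps, hcAlow, hcAcount, hiadist⟩ := haside
    obtain ⟨nb, cB, ib, hib, hcB0, hcBn, hcBsteps, hcBlow, hcBcount, hibdist⟩ := hbside
    -- middle chain
    obtain ⟨m, cM, hcM0, hcMm, hcMsteps, hcMmem, hcMcount⟩ := chain_seg c n hsteps ia ib hia hib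
    have hdab : dist (c ia) (c ib) ≤ 6*(E+1) := by
      calc dist (c ia) (c ib) ≤ dist (c ia) (γ u) + dist (γ u) (γ v) + dist (γ v) (c ib) :=
            dist_triangle4 _ _ _ _
        _ ≤ (E+1) + 4*(E+1) + (E+1) := by
            rw [dist_comm (c ia) (γ u)]
            have := hguv
            have h2 : dist (γ u) (γ v) ≤ 4*(E+1) := by rw [hguv]; linarith
            exact add_le_add (add_le_add hiadist h2) hibdist
        _ = 6*(E+1) := by ring
    have hmcount : (m : ℝ) ≤ 6*a*(E+1) + b := by
      calc (m:ℝ) ≤ |(ia:ℝ) - ib| := hcMcount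
        _ ≤ a * dist (c ia) (c ib) + b := hlower ia hia ib hib
        _ ≤ 6*a*(E+1) + b := by
            have h := mul_le_mul_of_nonneg_left hdab ha
            linarith only [h]
    -- concatenate
    obtain ⟨c₁, hc₁0, hc₁n, hc₁steps, hc₁mem⟩ :=
      chain_append cA cM na m hcAsteps hcMsteps (by rw [hcAn, hcM0])
    obtain ⟨cT, hcT0, hcTn, hcTsteps, hcTmem⟩ :=
      chain_append c₁ cB (na + m) nb hc₁steps hcBsteps (by rw [hc₁n, hcMm, hcB0])
    set nT := na + m + nb with hnT
    have hTlow : ∀ i ≤ nT, E ≤ dist (γ t₀) (cT i) := by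
      intro i hi
      rcases hcTmem i hi with ⟨j, hj, hje⟩ | ⟨j, hj, hje⟩
      · rcases hc₁mem j hj with ⟨l, hl, hle⟩ | ⟨l, hl, hle⟩
        · rw [hje, hle]; exact hcAlow l hl
        · obtain ⟨r, hr, hre⟩ := hcMmem l hl
          rw [hje, hle, hre]
          exact hdistlow r hr
      · rw [hje]; exact hcBlow j hj
    have hTcount : (nT : ℝ) ≤ α * (E+1) + β := by
      have e : (nT : ℝ) = (na : ℝ) + m + nb := by rw [hnT]; push_cast; ring
      rw [e, hα, hβ]
      linarith only [hcAcount, hmcount, hcBcount, hE0]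
    -- choose k
    set k : ℕ := ⌊(E - K)/(δ+1)⌋₊ with hk
    have hd1 : (0:ℝ) < δ + 1 := by linarith
    have hEK : K < E := by linarith
    have hq : (E - K)/(δ+1) * (δ+1) = E - K := div_mul_cancel₀ _ (ne_of_gt hd1)
    have hq0 : 0 < (E - K)/(δ+1) := div_pos (by linarith) hd1
    have hkle : (k:ℝ) ≤ (E - K)/(δ+1) := Nat.floor_le (le_of_lt hq0)
    have hkge : (E - K)/(δ+1) - 1 < (k:ℝ) := Nat.sub_one_lt_floor _
    clear_value k
    have hq2 : δ * ((E - K)/(δ+1)) = (E - K) - (E - K)/(δ+1) := by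
      linear_combination hq
    -- δ * k + K < E
    have main1 : δ * k + K < E := by
      have h1 : δ * (k:ℝ) ≤ δ * ((E - K)/(δ+1)) := mul_le_mul_of_nonneg_left hkle hδ
      linarith only [h1, hq2, hq0]
    -- q > A' + 2B' + 3
    have hqbig : A' + 2*B' + 3 < (E - K)/(δ+1) := by
      have hEE' : (δ+1) * (A' + 2*B' + 3) < E - K := by
        rw [hE₀] at hEgt
        linarith only [hEgt]
      have hEE : (A' + 2*B' + 3) * (δ+1) < ((E - K)/(δ+1)) * (δ+1) := by
        rw [hq]
        linarith only [hEE']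
      exact lt_of_mul_lt_mul_right hEE (le_of_lt hd1)
    have hm'1 : A' + 2*B' + 2 < (k:ℝ) := by linarith only [hkge, hqbig]
    have hEle : E ≤ K + (δ+1) * ((k:ℝ) + 1) := by
      have h1 : (E - K)/(δ+1) ≤ (k:ℝ) + 1 := by linarith only [hkge]
      have h2 : ((E - K)/(δ+1)) * (δ+1) ≤ ((k:ℝ) + 1) * (δ+1) :=
        mul_le_mul_of_nonneg_right h1 (le_of_lt hd1)
      rw [hq] at h2
      linarith only [h2]
    have main2 : (nT : ℝ) ≤ 2 ^ k := by
      have h1 : (nT : ℝ) ≤ A' + B' + B' * k := by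
        have h0 : α * (E + 1) ≤ α * (K + (δ+1)*((k:ℝ)+1) + 1) :=
          mul_le_mul_of_nonneg_left (by linarith only [hEle]) (le_of_lt hα0)
        have e : α * (K + (δ+1)*((k:ℝ)+1) + 1) + β = A' + B' + B' * k := by
          rw [hA', hB']; ring
        linarith only [hTcount, h0, e]
      have h2 : ((k:ℝ))^2 ≤ 2 * 2^k := sq_le_two_pow_real k
      have hk0 : (0:ℝ) ≤ (k:ℝ) := Nat.cast_nonneg k
      have hk2 : (A'+2*B'+2) * (k:ℝ) ≤ (k:ℝ) * k := mul_le_mul_of_nonneg_right (le_of_lt hm'1) hk0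
      have h3 : 2 * (A' + B' + B' * k) ≤ ((k:ℝ))^2 := by
        rw [sq]
        linarith only [hk2, hm'1, mul_nonneg (le_of_lt hA'0) hk0, hB'0, hA'0]
      linarith only [h1, h2, h3]
    have main2nat : nT ≤ 2 ^ k := by
      have : ((nT : ℕ) : ℝ) ≤ ((2^k : ℕ) : ℝ) := by push_cast; exact main2
      exact_mod_cast this
    -- apply chainA on the subgeodesic
    have hsub : IsGeodesicSegment (γ '' Set.Icc u v) (cT 0) (cT nT) := by
      rw [hcT0, hcTn, hc₁0, hcA0, hcBn]
      exact subgeodesic hiso hu hv huv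
    have hmem : γ t₀ ∈ γ '' Set.Icc u v := ⟨t₀, ⟨hut, htv⟩, rfl⟩
    obtain ⟨i, hi, hdi⟩ := chainA hXgeo hδ hX hK0 k nT cT main2nat hcTsteps _ hsub (γ t₀) hmem
    have hlow := hTlow i hi
    linarith only [hdi, main1, hlow]
  -- conclude
  rw [him] at hp
  obtain ⟨t, ht, rfl⟩ := hp
  obtain ⟨i, hi, hieq⟩ := hFex t
  refine ⟨i, hi, ?_⟩
  have h1 : F t ≤ sSup S := le_csSup hSbdd (Set.mem_image_of_mem F ht)
  rw [← hieq]
  linarith only [h1, hDs]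

/-- Morse-type stability, second direction: every point of a quasi-geodesic chain lies
within a uniform distance of any geodesic joining its endpoints. -/
lemma chainC {X : Type*} [MetricSpace X] {K a b D : ℝ} (hK : 1 ≤ K) (ha : 0 ≤ a)
    (hb : 0 ≤ b) (hD : 0 ≤ D) (n : ℕ) (c : ℕ → X)
    (hsteps : ∀ i < n, dist (c i) (c (i+1)) ≤ K)
    (hlower : ∀ i ≤ n, ∀ j ≤ n, |(i:ℝ) - (j:ℝ)| ≤ a * dist (c i) (c j) + b)
    (s : Set X) (hs : IsGeodesicSegment s (c 0) (c n))
    (hB : ∀ p ∈ s, ∃ i ≤ n, dist p (c i) ≤ D) :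
    ∀ j ≤ n, ∃ q ∈ s, dist (c j) q ≤ K * (a * (2*D + 1) + b) + D := by
  intro j hj
  have hK0 : (0:ℝ) ≤ K := le_trans zero_le_one hK
  have hbound0 : 0 ≤ K * (a * (2*D + 1) + b) + D := by positivity
  obtain ⟨γ, h0, hd, hiso, him⟩ := hs
  set d := dist (c 0) (c n) with hdd
  have hd0 : (0:ℝ) ≤ d := dist_nonneg
  set L : ℕ := max 1 ⌈d⌉₊ with hL
  have hL1 : 1 ≤ L := le_max_left _ _
  have hLd : d ≤ (L:ℝ) := by
    calc d ≤ (⌈d⌉₊ : ℝ) := Nat.le_ceil d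
      _ ≤ (L:ℝ) := by exact_mod_cast Nat.cast_le.mpr (le_max_right _ _)
  have hmem : ∀ l : ℕ, min (l:ℝ) d ∈ Set.Icc (0:ℝ) d :=
    fun l => ⟨le_min (Nat.cast_nonneg l) hd0, min_le_right _ _⟩
  have hMex : ∀ l : ℕ, ∃ m : ℕ, m ≤ n ∧ dist (γ (min (l:ℝ) d)) (c m) ≤ D ∧
      (l = 0 → m = 0) ∧ (L ≤ l → m = n) := by
    intro l
    by_cases hl0 : l = 0
    · refine ⟨0, Nat.zero_le n, ?_, fun _ => rfl, fun hcon => absurd hcon (by omega)⟩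
      subst hl0
      have : min ((0:ℕ):ℝ) d = 0 := by simp [hd0]
      rw [this, h0]
      simp [hD]
    · by_cases hlL : L ≤ l
      · refine ⟨n, le_rfl, ?_, fun h => absurd h hl0, fun _ => rfl⟩
        have : min ((l:ℝ)) d = d := min_eq_right (le_trans hLd (Nat.cast_le.mpr hlL))
        rw [this, hd]
        simp [hD]
      · obtain ⟨m, hm, hmd⟩ := hB (γ (min (l:ℝ) d)) (by rw [him]; exact ⟨_, hmem l, rfl⟩)
        exact ⟨m, hm, hmd, fun h => absurd h hl0, fun h => absurd h hlL⟩
  choose M hMn hMd hM0 hML using hMex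
  have hP : ∃ l : ℕ, j ≤ M l := ⟨L, by rw [hML L le_rfl]; exact hj⟩
  set l₁ := Nat.find hP with hl₁
  have hPl₁ : j ≤ M l₁ := Nat.find_spec hP
  by_cases hl₁0 : l₁ = 0
  · have hj0 : j = 0 := by
      have h1 := hM0 0 rfl
      rw [hl₁0] at hPl₁
      omega
    refine ⟨γ 0, by rw [him]; exact ⟨0, ⟨le_rfl, hd0⟩, rfl⟩, ?_⟩
    rw [hj0, h0]
    simpa using hbound0
  · have hprev : M (l₁ - 1) < j := by
      have := Nat.find_min hP (m := l₁ - 1) (by omega)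
      omega
    have hcons : dist (γ (min ((l₁-1 : ℕ):ℝ) d)) (γ (min ((l₁:ℕ):ℝ) d)) ≤ 1 := by
      rw [hiso _ (hmem _) _ (hmem _)]
      rw [abs_le]
      have e1 : ((l₁ - 1 : ℕ):ℝ) = (l₁:ℝ) - 1 := by
        push_cast [Nat.cast_sub (by omega : 1 ≤ l₁)]; ring
      have h1 : min ((l₁:ℝ) - 1) d ≤ min ((l₁:ℝ)) d := min_le_min (by linarith) le_rfl
      have h2 : min ((l₁:ℝ)) d ≤ min ((l₁:ℝ) - 1) d + 1 := by
        rcases le_total d ((l₁:ℝ) - 1) with h | h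
        · rw [min_eq_right h]
          have := min_le_right ((l₁:ℝ)) d
          linarith
        · rw [min_eq_left h]
          have := min_le_left ((l₁:ℝ)) d
          linarith
      constructor
      · rw [e1]; linarith
      · rw [e1]; linarith
    have hMM : dist (c (M (l₁-1))) (c (M l₁)) ≤ 2*D + 1 := by
      calc dist (c (M (l₁-1))) (c (M l₁)) ≤
            dist (c (M (l₁-1))) (γ (min ((l₁-1:ℕ):ℝ) d)) +
            dist (γ (min ((l₁-1:ℕ):ℝ) d)) (γ (min ((l₁:ℕ):ℝ) d)) +
            dist (γ (min ((l₁:ℕ):ℝ) d)) (c (M l₁)) := dist_triangle4 _ _ _ _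
        _ ≤ D + 1 + D := by
            refine add_le_add (add_le_add ?_ hcons) (hMd l₁)
            rw [dist_comm]; exact hMd (l₁ - 1)
        _ = 2*D + 1 := by ring
    have hgap : ((M l₁ : ℝ)) - (M (l₁-1)) ≤ a * (2*D+1) + b := by
      have h1 := hlower (M (l₁-1)) (hMn _) (M l₁) (hMn _)
      have h2 : |((M (l₁-1)):ℝ) - (M l₁)| = (M l₁ : ℝ) - (M (l₁-1)) := by
        rw [abs_sub_comm, abs_of_nonneg]
        have : M (l₁-1) ≤ M l₁ := by omega
        exact sub_nonneg.mpr (Nat.cast_le.mpr this)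
      rw [h2] at h1
      have h3 : a * dist (c (M (l₁-1))) (c (M l₁)) ≤ a * (2*D+1) := by
        exact mul_le_mul_of_nonneg_left hMM ha
      linarith
    have hjgap : ((M l₁ : ℝ)) - j ≤ a * (2*D+1) + b := by
      have : (j:ℝ) ≥ (M (l₁-1) : ℝ) := Nat.cast_le.mpr (le_of_lt hprev)
      linarith
    have hcj : dist (c j) (c (M l₁)) ≤ K * (a * (2*D+1) + b) := by
      have h1 : dist (c j) (c (M l₁)) ≤ K * ((M l₁ : ℝ) - j) :=
        chain_dist hK0 c n hsteps j (M l₁) (by omega) (hMn _)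
      have h2 : K * ((M l₁ : ℝ) - j) ≤ K * (a * (2*D+1) + b) :=
        mul_le_mul_of_nonneg_left hjgap hK0
      linarith
    refine ⟨γ (min ((l₁:ℕ):ℝ) d), by rw [him]; exact ⟨_, hmem _, rfl⟩, ?_⟩
    calc dist (c j) (γ (min ((l₁:ℕ):ℝ) d)) ≤
          dist (c j) (c (M l₁)) + dist (c (M l₁)) (γ (min ((l₁:ℕ):ℝ) d)) := dist_triangle _ _ _
      _ ≤ K * (a * (2*D+1) + b) + D := by
          refine add_le_add hcj ?_
          rw [dist_comm]; exact hMd l₁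


set_option maxHeartbeats 1000000 in
/-- Hyperbolicity is a quasiisometry invariant among geodesic spaces: if `X` is a
`δ`-hyperbolic geodesic space and `f : X → Y` is a quasiisometry onto a geodesic space
`Y`, then `Y` is `δ'`-hyperbolic for some `δ' ≥ 0`. -/
theorem hyperbolic_quasiIsometry_invariant (X Y : Type) [MetricSpace X] [MetricSpace Y]
    (hXgeo : IsGeodesicSpace X) (hYgeo : IsGeodesicSpace Y)
    (δ : ℝ) (hδ : 0 ≤ δ) (hX : DeltaHyperbolic X δ)
    (f : X → Y) (hf : IsQuasiIsometry f) :
    ∃ δ' : ℝ, 0 ≤ δ' ∧ DeltaHyperbolic Y δ' := by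
  obtain ⟨lam, C, hlam, hC, hbounds, hdense⟩ := hf
  choose g hg using hdense
  have hg1 : ∀ y y' : Y, dist (g y) (g y') ≤ lam * (dist y y' + 3*C) := by
    intro y y'
    have h1 := (hbounds (g y) (g y')).1
    have h2 : dist (f (g y)) (f (g y')) ≤ dist y y' + 2*C := by
      calc dist (f (g y)) (f (g y')) ≤
            dist (f (g y)) y + dist y y' + dist y' (f (g y')) := dist_triangle4 _ _ _ _
        _ ≤ C + dist y y' + C := by
            have := hg y
            have h3 : dist y' (f (g y')) < C := by rw [dist_comm]; exact hg y'
            linarith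
        _ = dist y y' + 2*C := by ring
    have h3 : lam⁻¹ * dist (g y) (g y') ≤ dist y y' + 3*C := by linarith
    calc dist (g y) (g y') = lam * (lam⁻¹ * dist (g y) (g y')) := by
          rw [← mul_assoc, mul_inv_cancel₀ (ne_of_gt hlam), one_mul]
      _ ≤ lam * (dist y y' + 3*C) := mul_le_mul_of_nonneg_left h3 (le_of_lt hlam)
  have hg2 : ∀ y y' : Y, dist y y' ≤ lam * dist (g y) (g y') + 3*C := by
    intro y y'
    have h1 := (hbounds (g y) (g y')).2
    calc dist y y' ≤ dist y (f (g y)) + dist (f (g y)) (f (g y')) + dist (f (g y')) y' :=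
          dist_triangle4 _ _ _ _
      _ ≤ C + (lam * dist (g y) (g y') + C) + C := by
          have h2 : dist y (f (g y)) < C := by rw [dist_comm]; exact hg y
          have h3 := hg y'
          linarith
      _ = lam * dist (g y) (g y') + 3*C := by ring
  set K : ℝ := lam * (1 + 3*C) + 1 with hKdef
  have hK : 1 ≤ K := by nlinarith
  set bb : ℝ := 3*C + 1 with hbbdef
  have hbb0 : (0:ℝ) ≤ bb := by linarith
  obtain ⟨D, hD0, hDprop⟩ := chainB hXgeo hδ hX (K := K) (a := lam) (b := bb) hK
    (le_of_lt hlam) hbb0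
  set D₂ : ℝ := K * (lam * (2*D + 1) + bb) + D with hD₂def
  have hD₂0 : 0 ≤ D₂ := by
    have h1 : (0:ℝ) ≤ 2*D + 1 := by linarith
    have h2 : (0:ℝ) ≤ lam * (2*D + 1) + bb := by
      have := mul_nonneg (le_of_lt hlam) h1
      linarith
    have h3 : (0:ℝ) ≤ K * (lam * (2*D + 1) + bb) := mul_nonneg (by linarith) h2
    rw [hD₂def]
    linarith
  set δ' : ℝ := 1 + lam * (D₂ + δ + D) + 3*C with hδ'def
  have hδ'0 : 0 ≤ δ' := by
    have h1 : (0:ℝ) ≤ lam * (D₂ + δ + D) := mul_nonneg (le_of_lt hlam) (by linarith)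
    rw [hδ'def]
    linarith
  refine ⟨δ', hδ'0, ?_⟩
  -- chain construction along a geodesic in Y
  have mkchain : ∀ (v w : Y) (s : Set Y), IsGeodesicSegment s v w →
      ∃ (n : ℕ) (c : ℕ → X), c 0 = g v ∧ c n = g w ∧
        (∀ i < n, dist (c i) (c (i+1)) ≤ K) ∧
        (∀ i ≤ n, ∀ j ≤ n, |(i:ℝ) - (j:ℝ)| ≤ lam * dist (c i) (c j) + bb) ∧
        (∀ i ≤ n, ∃ q ∈ s, c i = g q) ∧
        (∀ p ∈ s, ∃ i ≤ n, ∃ q ∈ s, c i = g q ∧ dist p q ≤ 1) := by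
    intro v w s hs
    obtain ⟨γ, h0, hd, hiso, him⟩ := hs
    set d := dist v w with hdd
    have hd0 : (0:ℝ) ≤ d := dist_nonneg
    set n : ℕ := ⌈d⌉₊ with hn
    have hdn : d ≤ (n:ℝ) := Nat.le_ceil d
    have hnd : (n:ℝ) < d + 1 := Nat.ceil_lt_add_one hd0
    have hmem : ∀ i : ℕ, min (i:ℝ) d ∈ Set.Icc (0:ℝ) d :=
      fun i => ⟨le_min (Nat.cast_nonneg i) hd0, min_le_right _ _⟩
    have htub : ∀ i : ℕ, min (i:ℝ) d ≤ (i:ℝ) := fun i => min_le_left _ _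
    have htlb : ∀ i : ℕ, i ≤ n → (i:ℝ) - 1 ≤ min (i:ℝ) d := by
      intro i hi
      rcases le_total ((i:ℝ)) d with h | h
      · rw [min_eq_left h]; linarith
      · rw [min_eq_right h]
        have : (i:ℝ) ≤ (n:ℝ) := Nat.cast_le.mpr hi
        linarith
    refine ⟨n, fun i => g (γ (min (i:ℝ) d)), ?_, ?_, ?_, ?_, ?_, ?_⟩
    · show g (γ (min ((0:ℕ):ℝ) d)) = g v
      have : min ((0:ℕ):ℝ) d = 0 := by simp [hd0]
      rw [this, h0]
    · show g (γ (min ((n:ℕ):ℝ) d)) = g w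
      rw [min_eq_right hdn, hd]
    · intro i hi
      show dist (g (γ (min ((i:ℕ):ℝ) d))) (g (γ (min ((i+1:ℕ):ℝ) d))) ≤ K
      have h1 : dist (γ (min ((i:ℕ):ℝ) d)) (γ (min ((i+1:ℕ):ℝ) d)) ≤ 1 := by
        rw [hiso _ (hmem i) _ (hmem (i+1))]
        rw [abs_le]
        have e : ((i+1:ℕ):ℝ) = (i:ℝ) + 1 := by push_cast; ring
        have h2 : min ((i:ℕ):ℝ) d ≤ min ((i+1:ℕ):ℝ) d := by
          apply min_le_min _ le_rfl
          rw [e]; linarith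
        have h3 : min ((i+1:ℕ):ℝ) d ≤ min ((i:ℕ):ℝ) d + 1 := by
          rcases le_total d ((i:ℝ)) with h | h
          · rw [min_eq_right (by rw [e]; linarith), min_eq_right h]
            linarith
          · rw [min_eq_left h]
            have := min_le_left ((i+1:ℕ):ℝ) d
            rw [e] at this ⊢
            linarith
        constructor <;> linarith
      calc dist (g (γ (min ((i:ℕ):ℝ) d))) (g (γ (min ((i+1:ℕ):ℝ) d))) ≤
            lam * (dist (γ (min ((i:ℕ):ℝ) d)) (γ (min ((i+1:ℕ):ℝ) d)) + 3*C) := hg1 _ _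
        _ ≤ lam * (1 + 3*C) := by
            apply mul_le_mul_of_nonneg_left _ (le_of_lt hlam)
            linarith
        _ ≤ K := by rw [hKdef]; linarith
    · intro i hi j hj
      show |(i:ℝ) - (j:ℝ)| ≤ lam * dist (g (γ (min ((i:ℕ):ℝ) d))) (g (γ (min ((j:ℕ):ℝ) d))) + bb
      have h1 : dist (γ (min ((i:ℕ):ℝ) d)) (γ (min ((j:ℕ):ℝ) d)) ≤
          lam * dist (g (γ (min ((i:ℕ):ℝ) d))) (g (γ (min ((j:ℕ):ℝ) d))) + 3*C := hg2 _ _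
      have h2 : |(i:ℝ) - (j:ℝ)| ≤ dist (γ (min ((i:ℕ):ℝ) d)) (γ (min ((j:ℕ):ℝ) d)) + 1 := by
        rw [hiso _ (hmem i) _ (hmem j)]
        have hi1 := htlb i hi
        have hj1 := htlb j hj
        have hi2 := htub i
        have hj2 := htub j
        have hA := le_abs_self (min ((i:ℕ):ℝ) d - min ((j:ℕ):ℝ) d)
        have hB := neg_abs_le (min ((i:ℕ):ℝ) d - min ((j:ℕ):ℝ) d)
        rw [abs_le]
        constructor
        · linarith
        · linarith
      rw [hbbdef]
      linarith
    · intro i hi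
      exact ⟨γ (min ((i:ℕ):ℝ) d), by rw [him]; exact ⟨_, hmem i, rfl⟩, rfl⟩
    · intro p hp
      rw [him] at hp
      obtain ⟨t, ht, rfl⟩ := hp
      refine ⟨⌈t⌉₊, ?_, γ (min ((⌈t⌉₊:ℕ):ℝ) d), by rw [him]; exact ⟨_, hmem _, rfl⟩, rfl, ?_⟩
      · exact Nat.ceil_le_ceil ht.2
      · have h1 : t ≤ min ((⌈t⌉₊:ℕ):ℝ) d := le_min (Nat.le_ceil t) ht.2
        have h2 : min ((⌈t⌉₊:ℕ):ℝ) d ≤ t + 1 := by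
          have := Nat.ceil_lt_add_one ht.1
          have := min_le_left ((⌈t⌉₊:ℕ):ℝ) d
          linarith
        rw [hiso _ ht _ (hmem _), abs_le]
        constructor <;> linarith
  -- the key estimate, for one side of a triangle
  have key : ∀ (u v w : Y) (s₁ s₂ s₃ : Set Y), IsGeodesicSegment s₁ v w →
      IsGeodesicSegment s₂ u w → IsGeodesicSegment s₃ u v →
      ∀ p ∈ s₁, ∃ q ∈ s₂ ∪ s₃, dist p q ≤ δ' := by
    intro u v w s₁ s₂ s₃ hs₁ hs₂ hs₃ p hp
    obtain ⟨n₁, c₁, hc₁0, hc₁n, hc₁steps, hc₁low, hc₁pt, hc₁near⟩ := mkchain v w s₁ hs₁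
    obtain ⟨n₂, c₂, hc₂0, hc₂n, hc₂steps, hc₂low, hc₂pt, hc₂near⟩ := mkchain u w s₂ hs₂
    obtain ⟨n₃, c₃, hc₃0, hc₃n, hc₃steps, hc₃low, hc₃pt, hc₃near⟩ := mkchain u v s₃ hs₃
    obtain ⟨G₁, hG₁⟩ := hXgeo (g v) (g w)
    obtain ⟨G₂, hG₂⟩ := hXgeo (g u) (g w)
    obtain ⟨G₃, hG₃⟩ := hXgeo (g u) (g v)
    have hG₁' : IsGeodesicSegment G₁ (c₁ 0) (c₁ n₁) := by rw [hc₁0, hc₁n]; exact hG₁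
    have hG₂' : IsGeodesicSegment G₂ (c₂ 0) (c₂ n₂) := by rw [hc₂0, hc₂n]; exact hG₂
    have hG₃' : IsGeodesicSegment G₃ (c₃ 0) (c₃ n₃) := by rw [hc₃0, hc₃n]; exact hG₃
    have hB₁ := hDprop n₁ c₁ hc₁steps hc₁low G₁ hG₁'
    have hB₂ := hDprop n₂ c₂ hc₂steps hc₂low G₂ hG₂'
    have hB₃ := hDprop n₃ c₃ hc₃steps hc₃low G₃ hG₃'
    obtain ⟨i, hi, q₀, hq₀s, hq₀eq, hpq₀⟩ := hc₁near p hp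
    have hC₁ : ∃ x₁ ∈ G₁, dist (c₁ i) x₁ ≤ D₂ := by
      rw [hD₂def]
      exact chainC hK (le_of_lt hlam) hbb0 hD0 n₁ c₁ hc₁steps hc₁low G₁ hG₁' hB₁ i hi
    obtain ⟨x₁, hx₁G, hx₁d⟩ := hC₁
    obtain ⟨thin₁, -, -⟩ := hX (g u) (g v) (g w) G₁ G₂ G₃ hG₁ hG₂ hG₃
    obtain ⟨x₂, hx₂, hx₁x₂⟩ := thin₁ x₁ hx₁G
    rcases hx₂ with h2 | h3
    · obtain ⟨j, hj, hjd⟩ := hB₂ x₂ h2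
      obtain ⟨q', hq's, hq'eq⟩ := hc₂pt j hj
      have hxx : dist (c₁ i) (c₂ j) ≤ D₂ + δ + D := by
        calc dist (c₁ i) (c₂ j) ≤ dist (c₁ i) x₁ + dist x₁ x₂ + dist x₂ (c₂ j) :=
              dist_triangle4 _ _ _ _
          _ ≤ D₂ + δ + D := add_le_add (add_le_add hx₁d hx₁x₂) hjd
      have hyy : dist q₀ q' ≤ lam * dist (c₁ i) (c₂ j) + 3*C := by
        have := hg2 q₀ q'
        rw [← hq₀eq, ← hq'eq] at this
        exact this
      refine ⟨q', Or.inl hq's, ?_⟩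
      calc dist p q' ≤ dist p q₀ + dist q₀ q' := dist_triangle _ _ _
        _ ≤ 1 + (lam * (D₂ + δ + D) + 3*C) := by
            have h5 : lam * dist (c₁ i) (c₂ j) ≤ lam * (D₂ + δ + D) :=
              mul_le_mul_of_nonneg_left hxx (le_of_lt hlam)
            linarith
        _ = δ' := by rw [hδ'def]; ring
    · obtain ⟨j, hj, hjd⟩ := hB₃ x₂ h3
      obtain ⟨q', hq's, hq'eq⟩ := hc₃pt j hj
      have hxx : dist (c₁ i) (c₃ j) ≤ D₂ + δ + D := by
        calc dist (c₁ i) (c₃ j) ≤ dist (c₁ i) x₁ + dist x₁ x₂ + dist x₂ (c₃ j) :=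
              dist_triangle4 _ _ _ _
          _ ≤ D₂ + δ + D := add_le_add (add_le_add hx₁d hx₁x₂) hjd
      have hyy : dist q₀ q' ≤ lam * dist (c₁ i) (c₃ j) + 3*C := by
        have := hg2 q₀ q'
        rw [← hq₀eq, ← hq'eq] at this
        exact this
      refine ⟨q', Or.inr hq's, ?_⟩
      calc dist p q' ≤ dist p q₀ + dist q₀ q' := dist_triangle _ _ _
        _ ≤ 1 + (lam * (D₂ + δ + D) + 3*C) := by
            have h5 : lam * dist (c₁ i) (c₃ j) ≤ lam * (D₂ + δ + D) :=
              mul_le_mul_of_nonneg_left hxx (le_of_lt hlam)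
            linarith
        _ = δ' := by rw [hδ'def]; ring
  intro x y z s₁ s₂ s₃ h₁ h₂ h₃
  exact ⟨fun p hp => key x y z s₁ s₂ s₃ h₁ h₂ h₃ p hp,
    fun p hp => key y x z s₂ s₁ s₃ h₂ h₁ (geodesic_symm h₃) p hp,
    fun p hp => key z x y s₃ s₁ s₂ h₃ (geodesic_symm h₁) (geodesic_symm h₂) p hp⟩
end
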